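/- arXiv:1312.3121 — 2 statements merged into one kernel-verified Lean document; each statement's English description precedes it below -/
import Mathlib

section
/- For any Grassmann necklace N and any i, j ∈ [n], one has N_i ≪_i N_j; in particular, any two sets of a Grassmann necklace are weakly separated. -/
open Finset

variable {n : ℕ} [NeZero n]

/-- Position of `x` in the cyclic order on `Fin n` starting at `i`. -/
def cpos (i x : Fin n) : ℕ := ((x - i : Fin n) : ℕ)

/-- `X ≪_i Y`: every element of `X \\ Y` precedes every element of `Y \\ X`
in the cyclic order starting at `i`. -/
def Ll (i : Fin n) (X Y : Finset (Fin n)) : Prop :=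
  ∀ x ∈ X \ Y, ∀ y ∈ Y \ X, cpos i x < cpos i y

/-- `X` and `Y` are weakly separated. -/
def WSep (X Y : Finset (Fin n)) : Prop := ∃ i : Fin n, Ll i X Y

/-- A Grassmann necklace in `C([n], r)`. -/
def IsNecklace (N : Fin n → Finset (Fin n)) (r : ℕ) : Prop :=
  (∀ i, (N i).card = r) ∧ ∀ i, (N i).erase i ⊆ N (i + 1)

/-!
An element `z ∈ N a` can only leave the necklace at the step from `N z` to `N (z + 1)`, so it
lies in every `N b` with `b` between `a` and `z` in the cyclic order. If `x ∈ N i \ N j`, this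
forces `x` to come before `j` in `<_i`. If `y ∈ N j \ N i` came before `j` in `<_i`, then `i`
would come before `y` in `<_j` and `y` would survive from `N j` to `N i`.
-/

open Fin.NatCast

omit [NeZero n] in
lemma cpos_eq (i x : Fin n) : cpos i x = if i ≤ x then (x : ℕ) - i else n + x - i := by
  unfold cpos
  split_ifs with h
  · exact Fin.coe_sub_iff_le.2 h
  · exact Fin.coe_sub_iff_lt.2 (not_le.1 h)

omit [NeZero n] in
lemma cpos_lt (i x : Fin n) : cpos i x < n := (x - i).isLt

lemma cpos_add_natCast (i : Fin n) {d : ℕ} (hd : d < n) : cpos i (i + (d : Fin n)) = d := by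
  simp [cpos, Fin.val_cast_of_lt hd]

lemma add_natCast_cpos (i x : Fin n) : i + (cpos i x : Fin n) = x := by
  simp [cpos]

omit [NeZero n] in
lemma cpos_le_cpos_of_lt {i j y : Fin n} (h : cpos i y < cpos i j) : cpos j i ≤ cpos j y := by
  simp only [cpos_eq, Fin.le_def] at h ⊢
  split_ifs at h ⊢ <;> omega

lemma mem_of_cpos_le {N : Fin n → Finset (Fin n)} (hstep : ∀ i, (N i).erase i ⊆ N (i + 1))
    {a z : Fin n} (hz : z ∈ N a) {b : Fin n} (hb : cpos a b ≤ cpos a z) : z ∈ N b := by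
  suffices ∀ d ≤ cpos a z, z ∈ N (a + (d : Fin n)) by
    simpa only [add_natCast_cpos] using this _ hb
  intro d hd
  induction d with
  | zero => simpa using hz
  | succ d ih =>
    have hne : z ≠ a + (d : Fin n) := by
      have := cpos_lt a z
      rintro rfl
      rw [cpos_add_natCast a (by omega)] at hd
      omega
    have hmem := hstep _ (mem_erase.2 ⟨hne, ih (by omega)⟩)
    rwa [add_assoc, ← Nat.cast_succ] at hmem

theorem necklace_ll_general (N : Fin n → Finset (Fin n)) (r : ℕ)
    (hN : IsNecklace N r) (i j : Fin n) :
    Ll i (N i) (N j) ∧ WSep (N i) (N j) := by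
  have hll : Ll i (N i) (N j) := by
    intro x hx y hy
    rw [mem_sdiff] at hx hy
    have hxj : cpos i x < cpos i j :=
      lt_of_not_ge fun h => hx.2 (mem_of_cpos_le hN.2 hx.1 h)
    have hjy : cpos i j ≤ cpos i y :=
      le_of_not_gt fun h => hy.2 (mem_of_cpos_le hN.2 hy.1 (cpos_le_cpos_of_lt h))
    exact hxj.trans_le hjy
  exact ⟨hll, i, hll⟩

/-- For a Grassmann necklace, `N_i ≪_i N_j` for all `i, j`; in particular all
sets of a necklace are pairwise weakly separated. -/
theorem necklace_ll (N : Fin n → Finset (Fin n)) (r : ℕ)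
    (hN : IsNecklace N r) (hii : ∀ i, i ∈ N i) (i j : Fin n) :
    Ll i (N i) (N j) ∧ WSep (N i) (N j) :=
  necklace_ll_general N r hN i j
end

section
/- Let π be a permutation of [n] with Grassmann necklace N(π). An r-element subset Y of [n] belongs to Int(N(π)) if and only if Y is a π-chamber set. -/
/-!
A failure of `N_a ≪_a Y` is a pair `x ∈ N_a \ Y`, `y ∈ Y \ N_a` with `y` before `x` in `<_a`.
Moving the base point from `a` to `π⁻¹(y)` turns such a pair into an alignment `(y, x)` with
`y ∈ Y` and `x ∉ Y`; conversely an alignment `(i, j)` with `i ∈ Y`, `j ∉ Y` is such a pair for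
the base point `a = π⁻¹(i)`, where `i ∉ N_a` and `j ∈ N_a`.
-/

open Finset

variable {n : ℕ}

/-- The Grassmann necklace associated with a permutation `π`:
`N_i = { k : k ≤_i π⁻¹(k) }`. -/
def necklaceOf (π : Equiv.Perm (Fin n)) (i : Fin n) : Finset (Fin n) :=
  Finset.univ.filter fun k => cpos i k ≤ cpos i (π.symm k)

/-- `(i, j)` is an alignment of `π`: the quadruple `π⁻¹(i), i, j, π⁻¹(j)`
occurs in this cyclic order (`j = π(j)` allowed, `i = π(i)` not). -/
def IsAlignment (π : Equiv.Perm (Fin n)) (i j : Fin n) : Prop :=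
  0 < cpos (π.symm i) i ∧
  cpos (π.symm i) i < cpos (π.symm i) j ∧
  cpos (π.symm i) j ≤ cpos (π.symm i) (π.symm j)

/-- The interior of a necklace `N`: `r`-sets `X` with `N_i ≪_i X` for all `i`. -/
def Interior (r : ℕ) (N : Fin n → Finset (Fin n)) : Set (Finset (Fin n)) :=
  {X | X.card = r ∧ ∀ i, Ll i (N i) X}

lemma cpos_self (i : Fin n) : cpos i i = 0 := by
  have : NeZero n := ⟨i.pos.ne'⟩
  simp [cpos]

lemma cpos_injective (i : Fin n) : Function.Injective (cpos i) := by
  have : NeZero n := ⟨i.pos.ne'⟩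
  exact fun _ _ h => sub_left_injective (b := i) (Fin.val_injective h)

lemma cpos_eq_sub_of_le {i a z : Fin n} (h : cpos i a ≤ cpos i z) :
    cpos a z = cpos i z - cpos i a := by
  have : NeZero n := ⟨i.pos.ne'⟩
  rw [cpos, ← sub_sub_sub_cancel_right z a i]
  exact Fin.sub_val_of_le h

lemma mem_necklaceOf {π : Equiv.Perm (Fin n)} {i k : Fin n} :
    k ∈ necklaceOf π i ↔ cpos i k ≤ cpos i (π.symm k) := by
  simp [necklaceOf]

lemma IsAlignment.mem_of_ll {π : Equiv.Perm (Fin n)} {i j : Fin n} {Y : Finset (Fin n)}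
    (hij : IsAlignment π i j) (hY : Ll (π.symm i) (necklaceOf π (π.symm i)) Y)
    (hi : i ∈ Y) : j ∈ Y := by
  obtain ⟨h_pos, h_lt, h_le⟩ := hij
  by_contra hj
  have hiN : i ∉ necklaceOf π (π.symm i) := by
    rw [mem_necklaceOf, cpos_self]
    omega
  have := hY j (mem_sdiff.mpr ⟨mem_necklaceOf.mpr h_le, hj⟩) i (mem_sdiff.mpr ⟨hi, hiN⟩)
  omega

lemma isAlignment_of_mem_necklaceOf {π : Equiv.Perm (Fin n)} {i x y : Fin n}
    (hx : x ∈ necklaceOf π i) (hy : y ∉ necklaceOf π i) (hyx : cpos i y < cpos i x) :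
    IsAlignment π y x := by
  rw [mem_necklaceOf] at hx hy
  have hy' : cpos i (π.symm y) < cpos i y := not_le.mp hy
  unfold IsAlignment
  rw [cpos_eq_sub_of_le (i := i) (z := y) hy'.le, cpos_eq_sub_of_le (i := i) (z := x) (by omega),
    cpos_eq_sub_of_le (i := i) (z := π.symm x) (by omega)]
  omega

lemma ll_necklaceOf_of_chamber {π : Equiv.Perm (Fin n)} {Y : Finset (Fin n)}
    (hY : ∀ i j : Fin n, IsAlignment π i j → i ∈ Y → j ∈ Y) (i : Fin n) :
    Ll i (necklaceOf π i) Y := by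
  intro x hx y hy
  obtain ⟨hxN, hxY⟩ := mem_sdiff.mp hx
  obtain ⟨hyY, hyN⟩ := mem_sdiff.mp hy
  by_contra! hyx
  have hlt : cpos i y < cpos i x :=
    hyx.lt_of_ne ((cpos_injective i).ne (ne_of_mem_of_not_mem hyY hxY))
  exact hxY (hY y x (isAlignment_of_mem_necklaceOf hxN hyN hlt) hyY)

theorem interior_iff_chamber_general (π : Equiv.Perm (Fin n)) (r : ℕ)
    (Y : Finset (Fin n)) (hYc : Y.card = r) :
    Y ∈ Interior r (necklaceOf π) ↔
      ∀ i j : Fin n, IsAlignment π i j → i ∈ Y → j ∈ Y :=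
  ⟨fun ⟨_, hY⟩ _ _ hij => hij.mem_of_ll (hY _),
    fun hY => ⟨hYc, ll_necklaceOf_of_chamber hY⟩⟩

/-- An `r`-element subset `Y` belongs to `Int(N(π))` iff `Y` is a
`π`-chamber set. -/
theorem interior_iff_chamber (π : Equiv.Perm (Fin n)) (r : ℕ)
    (hr : ∀ i, (necklaceOf π i).card = r)
    (Y : Finset (Fin n)) (hYc : Y.card = r) :
    Y ∈ Interior r (necklaceOf π) ↔
      ∀ i j : Fin n, IsAlignment π i j → i ∈ Y → j ∈ Y :=
  interior_iff_chamber_general π r Y hYc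
end
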